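/- If for every ε > 0 the series Σₙ exp(−ε zₙ) converges, where zₙ = ν⁻¹(ln n)·ν′(ν⁻¹(ln n)) and (ξᵢ) satisfies the uniform tail bound P((max_{i≤n}ξᵢ − ν⁻¹(ln n))·ν′(ν⁻¹(ln n)) > u) ≤ e^{−u} for u ≥ 0, then almost surely limsup_{n→∞} (max_{i≤n} ξᵢ)/ν⁻¹(ln n) ≤ 1. -/

import Mathlib

/-!
For each `ε > 0` the tail bound with `u = ε zₙ` gives
`P(Mₙ > (1 + ε) qₙ) ≤ exp(-ε zₙ)`, because `zₙ = qₙ ν'(qₙ)` and eventually `qₙ > 0`, `ν'(qₙ) > 0`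
(`ν(qₙ) = ln n` forces `qₙ → ∞`). These probabilities are summable,
so by Borel–Cantelli almost surely `Mₙ / qₙ ≤ 1 + ε` for all large `n`. Intersecting over
`ε = 1/(k+1)` gives the bound on the limsup.
-/

open MeasureTheory Real Filter

lemma tendsto_atTop_of_tendsto_continuous_comp {α : Type*} {l : Filter α} {ν : ℝ → ℝ}
    (hν : Continuous ν) {q : α → ℝ} (hq : ∀ᶠ x in l, 0 ≤ q x)
    (hνq : Tendsto (ν ∘ q) l atTop) : Tendsto q l atTop := by
  refine tendsto_atTop.2 fun C => ?_
  obtain ⟨B, hB⟩ := (isCompact_Icc (a := 0) (b := C)).bddAbove_image hν.continuousOn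
  filter_upwards [hq, hνq.eventually_gt_atTop B] with x hx0 hxB
  by_contra! hxC
  exact hxB.not_ge (hB ⟨q x, ⟨hx0, hxC.le⟩, rfl⟩)

lemma limsup_le_of_forall_nat_eventually_le {α : Type*} {l : Filter α} {f : α → ℝ} {c : ℝ}
    (hc : 0 ≤ c) (h : ∀ k : ℕ, ∀ᶠ x in l, f x ≤ c + 1 / (k + 1)) : limsup f l ≤ c := by
  refine le_of_forall_pos_le_add fun ε hε => ?_
  obtain ⟨k, hk⟩ := exists_nat_one_div_lt hε
  have hmem : c + ε ∈ {a | ∀ᶠ x in l, f x ≤ a} := (h k).mono fun x hx => by linarith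
  rw [limsup_eq]
  by_cases hbdd : BddBelow {a | ∀ᶠ x in l, f x ≤ a}
  · exact csInf_le hbdd hmem
  · -- junk value: an unbounded-below set of reals has infimum `0`
    rw [Real.sInf_of_not_bddBelow hbdd]
    linarith

lemma ae_eventually_le_of_summable_tail {Ω : Type*} [MeasurableSpace Ω] {P : Measure Ω}
    [IsFiniteMeasure P] {X : ℕ → Ω → ℝ} {a b : ℕ → ℝ} (hb0 : ∀ n, 0 ≤ b n)
    (hb : Summable b) (htail : ∀ᶠ n in atTop, (P {ω | a n < X n ω}).toReal ≤ b n) :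
    ∀ᵐ ω ∂P, ∀ᶠ n in atTop, X n ω ≤ a n := by
  obtain ⟨N, hN⟩ := eventually_atTop.1 htail
  set s : ℕ → Set Ω := fun n => if N ≤ n then {ω | a n < X n ω} else ∅
  have hs : ∀ n, P (s n) ≤ ENNReal.ofReal (b n) := by
    intro n
    by_cases hn : N ≤ n
    · simpa only [s, if_pos hn, ENNReal.ofReal_toReal (measure_ne_top P _)] using
        ENNReal.ofReal_le_ofReal (hN n hn)
    · simp only [s, if_neg hn, measure_empty, zero_le]
  have hsum : ∑' n, P (s n) ≠ ⊤ :=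
    ne_top_of_le_ne_top ENNReal.ofReal_ne_top <|
      (ENNReal.tsum_le_tsum hs).trans_eq (ENNReal.ofReal_tsum_of_nonneg hb0 hb).symm
  filter_upwards [ae_eventually_notMem hsum] with ω hω
  filter_upwards [hω, eventually_ge_atTop N] with n hn hNn
  simpa only [s, if_pos hNn, Set.mem_ofPred_eq, not_lt] using hn

lemma div_le_one_add_of_sub_mul_le {m q v ε : ℝ} (hq : 0 < q) (hv : 0 < v)
    (h : (m - q) * v ≤ ε * (q * v)) : m / q ≤ 1 + ε := by
  rw [div_le_iff₀ hq]
  linarith [le_of_mul_le_mul_right (by linarith : (m - q) * v ≤ (ε * q) * v) hv]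

theorem limsup_max_le_one_general
    {Ω : Type*} [MeasurableSpace Ω] (P : Measure Ω) [IsProbabilityMeasure P]
    (ν ν' : ℝ → ℝ)
    (hderiv : ∀ x : ℝ, HasDerivAt ν (ν' x) x)
    (hν'lim : Tendsto ν' atTop atTop)
    (M : ℕ → Ω → ℝ)
    (q z : ℕ → ℝ)
    (hq : ∀ n : ℕ, 3 ≤ n → 0 ≤ q n ∧ ν (q n) = Real.log n)
    (hz : ∀ n : ℕ, z n = q n * ν' (q n))
    (htail : ∀ n : ℕ, 3 ≤ n → ∀ u : ℝ, 0 ≤ u →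
      (P {ω | u < (M n ω - q n) * ν' (q n)}).toReal ≤ Real.exp (-u))
    (hsum : ∀ ε : ℝ, 0 < ε → Summable (fun n : ℕ => Real.exp (-(ε * z n)))) :
    ∀ᵐ ω ∂P, Filter.limsup (fun n : ℕ => M n ω / q n) atTop ≤ 1 := by
  have hq_tendsto : Tendsto q atTop atTop := by
    refine tendsto_atTop_of_tendsto_continuous_comp
      (continuous_iff_continuousAt.2 fun x => (hderiv x).continuousAt)
      ((eventually_ge_atTop 3).mono fun n hn => (hq n hn).1) ?_
    refine (tendsto_log_atTop.comp tendsto_natCast_atTop_atTop).congr' ?_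
    filter_upwards [eventually_ge_atTop 3] with n hn using (hq n hn).2.symm
  have hgood : ∀ᶠ n in atTop, 3 ≤ n ∧ 0 < q n ∧ 0 < ν' (q n) :=
    (eventually_ge_atTop 3).and <|
      (hq_tendsto.eventually_gt_atTop 0).and ((hν'lim.comp hq_tendsto).eventually_gt_atTop 0)
  have hε : ∀ ε : ℝ, 0 < ε → ∀ᵐ ω ∂P, ∀ᶠ n in atTop, M n ω / q n ≤ 1 + ε := by
    intro ε hε
    have htail_ε : ∀ᶠ n in atTop,
        (P {ω | ε * z n < (M n ω - q n) * ν' (q n)}).toReal ≤ Real.exp (-(ε * z n)) := by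
      filter_upwards [hgood] with n ⟨h3, hq0, hν'0⟩
      exact htail n h3 _ (by rw [hz]; positivity)
    filter_upwards [ae_eventually_le_of_summable_tail (fun n => (exp_pos _).le) (hsum ε hε)
      htail_ε] with ω hω
    filter_upwards [hω, hgood] with n hn ⟨_, hq0, hν'0⟩
    exact div_le_one_add_of_sub_mul_le hq0 hν'0 (hz n ▸ hn)
  have hk : ∀ᵐ ω ∂P, ∀ k : ℕ, ∀ᶠ n in atTop, M n ω / q n ≤ 1 + 1 / (k + 1) :=
    ae_all_iff.2 fun k => hε _ (by positivity)
  filter_upwards [hk] with ω hω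
  exact limsup_le_of_forall_nat_eventually_le zero_le_one hω

/-- If for every ε>0 the series Σ exp(-ε zₙ) converges, then a.s.
`limsup (max_{i≤n} ξᵢ)/ν⁻¹(ln n) ≤ 1`. -/
theorem limsup_max_le_one
    {Ω : Type*} [MeasurableSpace Ω] (P : Measure Ω) [IsProbabilityMeasure P]
    (ν ν' : ℝ → ℝ)
    (hconv : ConvexOn ℝ (Set.Ici 0) ν)
    (hderiv : ∀ x : ℝ, HasDerivAt ν (ν' x) x)
    (hν'mono : StrictMono ν')
    (hνlim : Tendsto ν atTop atTop) (hν'lim : Tendsto ν' atTop atTop)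
    (ξ : ℕ → Ω → ℝ)
    (M : ℕ → Ω → ℝ)
    (hM : ∀ n : ℕ, ∀ hn : 0 < n, ∀ ω : Ω,
      M n ω = (Finset.range n).sup' (Finset.nonempty_range_iff.mpr hn.ne') (fun i => ξ i ω))
    (q z : ℕ → ℝ)
    (hq : ∀ n : ℕ, 3 ≤ n → 0 ≤ q n ∧ ν (q n) = Real.log n)
    (hz : ∀ n : ℕ, z n = q n * ν' (q n))
    (htail : ∀ n : ℕ, 3 ≤ n → ∀ u : ℝ, 0 ≤ u →
      (P {ω | u < (M n ω - q n) * ν' (q n)}).toReal ≤ Real.exp (-u))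
    (hsum : ∀ ε : ℝ, 0 < ε → Summable (fun n : ℕ => Real.exp (-(ε * z n)))) :
    ∀ᵐ ω ∂P, Filter.limsup (fun n : ℕ => M n ω / q n) atTop ≤ 1 :=
  limsup_max_le_one_general P ν ν' hderiv hν'lim M q z hq hz htail hsum
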